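/- arXiv:1907.09975 — 2 statements merged into one kernel-verified Lean document; each statement's English description precedes it below -/
import Mathlib

section
/- Let K be a field of characteristic zero and let H be a graded connected bialgebra over K, i.e. a K-bialgebra H equipped with K-submodules H⁰, H¹, H², … of which H is the internal direct sum, such that 1 ∈ H⁰, Hⁱ·Hʲ ⊆ H^(i+j) for all i,j, Δ(Hⁿ) is contained in Σ_{i+j=n} (the image of Hⁱ ⊗ Hʲ in H ⊗ H) for all n, and H⁰ is one-dimensional over K. Then there exists a unique K-linear map S : H → H satisfying m ∘ (S ⊗ id) ∘ Δ = u ∘ ε = m ∘ (id ⊗ S) ∘ Δ (where m is the multiplication, u the unit map and ε the counit); that is, H is a Hopf algebra with antipode S. -/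
/-!
**Statement 0.** Every graded connected bialgebra `H` over a field `K` of characteristic
zero has a unique antipode `S : H → H`, i.e. a `K`-linear map satisfying
`m ∘ (S ⊗ id) ∘ Δ = u ∘ ε = m ∘ (id ⊗ S) ∘ Δ`; hence `H` is a Hopf algebra.
-/

open TensorProduct

namespace GradedAntipode

variable {K : Type} [Field K] {H : Type} [Ring H] [Bialgebra K H]

/-- Convolution product on `H →ₗ[K] H`. -/
noncomputable def conv (f g : H →ₗ[K] H) : H →ₗ[K] H :=
  LinearMap.mul' K H ∘ₗ TensorProduct.map f g ∘ₗ Coalgebra.comul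

/-- Convolution unit. -/
noncomputable def convOne : H →ₗ[K] H :=
  Algebra.linearMap K H ∘ₗ Coalgebra.counit

lemma conv_apply (f g : H →ₗ[K] H) (x : H) :
    conv f g x = LinearMap.mul' K H (TensorProduct.map f g (Coalgebra.comul (R := K) x)) := rfl

lemma conv_apply_repr (f g : H →ₗ[K] H) {x : H} (r : Coalgebra.Repr K x (H × H)) :
    conv f g x = ∑ i ∈ r.index, f (r.left i) * g (r.right i) := by
  rw [conv_apply, ← r.eq]
  simp

lemma sum_counit_smul_right {x : H} (r : Coalgebra.Repr K x (H × H)) :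
    ∑ i ∈ r.index, Coalgebra.counit (R := K) (r.left i) • r.right i = x := by
  have h := Coalgebra.sum_counit_tmul_eq r
  have h2 := congrArg (TensorProduct.lid K H) h
  rw [map_sum] at h2
  simpa only [TensorProduct.lid_tmul, one_smul] using h2

lemma sum_counit_smul_left {x : H} (r : Coalgebra.Repr K x (H × H)) :
    ∑ i ∈ r.index, Coalgebra.counit (R := K) (r.right i) • r.left i = x := by
  have h := Coalgebra.sum_tmul_counit_eq r
  have h2 := congrArg (TensorProduct.rid K H) h
  rw [map_sum] at h2
  simpa only [TensorProduct.rid_tmul, one_smul] using h2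

lemma conv_one_left (f : H →ₗ[K] H) : conv (convOne (K := K)) f = f := by
  ext x
  have r : Coalgebra.Repr K x (H × H) := Coalgebra.Repr.arbitrary K x
  rw [conv_apply_repr _ _ r]
  have : ∀ i, (convOne (K := K) (r.left i) : H) * f (r.right i)
      = Coalgebra.counit (R := K) (r.left i) • f (r.right i) := by
    intro i
    rw [Algebra.smul_def]
    rfl
  simp_rw [this, ← map_smul, ← map_sum, sum_counit_smul_right r]

lemma conv_one_right (f : H →ₗ[K] H) : conv f (convOne (K := K)) = f := by
  ext x
  have r : Coalgebra.Repr K x (H × H) := Coalgebra.Repr.arbitrary K x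
  rw [conv_apply_repr _ _ r]
  have : ∀ i, f (r.left i) * (convOne (K := K) (r.right i) : H)
      = Coalgebra.counit (R := K) (r.right i) • f (r.left i) := by
    intro i
    rw [Algebra.smul_def, Algebra.commutes]
    rfl
  simp_rw [this, ← map_smul, ← map_sum, sum_counit_smul_left r]

lemma conv_assoc (f g h : H →ₗ[K] H) : conv (conv f g) h = conv f (conv g h) := by
  ext x
  classical
  set r : Coalgebra.Repr K x (H × H) := Coalgebra.Repr.arbitrary K x with hr
  set a₁ : ∀ i : H × H, Coalgebra.Repr K (r.left i) (H × H) := fun i => Coalgebra.Repr.arbitrary K _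
  set a₂ : ∀ i : H × H, Coalgebra.Repr K (r.right i) (H × H) := fun i => Coalgebra.Repr.arbitrary K _
  have key := Coalgebra.sum_map_tmul_tmul_eq (repr := r) (a₁ := a₁) (a₂ := a₂) f g h x
  have key2 := congrArg (LinearMap.mul' K H ∘ₗ LinearMap.lTensor H (LinearMap.mul' K H)) key
  simp only [map_sum, LinearMap.comp_apply, LinearMap.lTensor_tmul, LinearMap.mul'_apply] at key2
  rw [conv_apply_repr _ _ r, conv_apply_repr _ _ r]
  have l1 : ∀ i ∈ r.index, conv f g (r.left i) * h (r.right i)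
      = ∑ j ∈ (a₁ i).index, f ((a₁ i).left j) * (g ((a₁ i).right j) * h (r.right i)) := by
    intro i _
    rw [conv_apply_repr _ _ (a₁ i), Finset.sum_mul]
    simp_rw [mul_assoc]
  have l2 : ∀ i ∈ r.index, f (r.left i) * conv g h (r.right i)
      = ∑ j ∈ (a₂ i).index, f (r.left i) * (g ((a₂ i).left j) * h ((a₂ i).right j)) := by
    intro i _
    rw [conv_apply_repr _ _ (a₂ i), Finset.mul_sum]
  rw [Finset.sum_congr rfl l1, Finset.sum_congr rfl l2]
  exact key2.symm

lemma conv_add_left (f₁ f₂ g : H →ₗ[K] H) : conv (f₁ + f₂) g = conv f₁ g + conv f₂ g := by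
  unfold conv
  rw [TensorProduct.map_add_left, LinearMap.add_comp, LinearMap.comp_add]

lemma conv_add_right (f g₁ g₂ : H →ₗ[K] H) : conv f (g₁ + g₂) = conv f g₁ + conv f g₂ := by
  unfold conv
  rw [TensorProduct.map_add_right, LinearMap.add_comp, LinearMap.comp_add]

lemma conv_smul_left (c : K) (f g : H →ₗ[K] H) : conv (c • f) g = c • conv f g := by
  unfold conv
  rw [TensorProduct.map_smul_left, LinearMap.smul_comp, LinearMap.comp_smul]

lemma conv_smul_right (c : K) (f g : H →ₗ[K] H) : conv f (c • g) = c • conv f g := by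
  unfold conv
  rw [TensorProduct.map_smul_right, LinearMap.smul_comp, LinearMap.comp_smul]

lemma conv_zero_right (f : H →ₗ[K] H) : conv f 0 = 0 := by
  unfold conv
  rw [TensorProduct.map_zero_right, LinearMap.zero_comp, LinearMap.comp_zero]

lemma conv_zero_left (f : H →ₗ[K] H) : conv 0 f = 0 := by
  unfold conv
  rw [TensorProduct.map_zero_left, LinearMap.zero_comp, LinearMap.comp_zero]

lemma conv_sum_right {ι : Type*} (s : Finset ι) (f : H →ₗ[K] H) (g : ι → H →ₗ[K] H) :
    conv f (∑ i ∈ s, g i) = ∑ i ∈ s, conv f (g i) := by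
  classical
  induction s using Finset.induction with
  | empty => simpa using conv_zero_right f
  | insert _ _ hx ih => rw [Finset.sum_insert hx, Finset.sum_insert hx, conv_add_right, ih]

lemma conv_sum_left {ι : Type*} (s : Finset ι) (f : H →ₗ[K] H) (g : ι → H →ₗ[K] H) :
    conv (∑ i ∈ s, g i) f = ∑ i ∈ s, conv (g i) f := by
  classical
  induction s using Finset.induction with
  | empty => simpa using conv_zero_left f
  | insert _ _ hx ih => rw [Finset.sum_insert hx, Finset.sum_insert hx, conv_add_left, ih]



/-- Iterated convolution power. -/
noncomputable def convPow (f : H →ₗ[K] H) : ℕ → (H →ₗ[K] H)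
  | 0 => convOne
  | n + 1 => conv (convPow f n) f

lemma conv_convPow (f : H →ₗ[K] H) (n : ℕ) : conv f (convPow f n) = convPow f (n + 1) := by
  induction n with
  | zero =>
    show conv f convOne = conv convOne f
    rw [conv_one_left, conv_one_right]
  | succ n ih =>
    show conv f (conv (convPow f n) f) = conv (convPow f (n+1)) f
    rw [← conv_assoc, ih]

/-- Truncated geometric series for the convolution inverse. -/
noncomputable def geom (f : H →ₗ[K] H) (N : ℕ) : H →ₗ[K] H :=
  ∑ m ∈ Finset.range (N + 1), ((-1 : K) ^ m) • convPow f m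

section Graded

variable (G : ℕ → Submodule K H)

lemma convOne_of_mem_G0 (hone : (1 : H) ∈ G 0) (hconn : Module.finrank K (G 0) = 1) :
    ∀ x ∈ G 0, convOne (K := K) x = x := by
  have hnt : (1 : H) ≠ 0 := by
    intro h
    have hs : Subsingleton H := subsingleton_of_zero_eq_one h.symm
    have : Module.finrank K (G 0) = 0 := by
      have : Subsingleton (G 0) := ⟨fun a b => Subtype.ext (Subsingleton.elim _ _)⟩
      exact Module.finrank_zero_of_subsingleton
    omega
  have hspan : Submodule.span K {(1 : H)} = G 0 := by
    haveI : FiniteDimensional K (G 0) := .of_finrank_eq_succ hconn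
    refine Submodule.eq_of_le_of_finrank_le (Submodule.span_le.mpr (by simpa using hone)) ?_
    rw [hconn, finrank_span_singleton hnt]
  intro x hx
  rw [← hspan] at hx
  obtain ⟨c, rfl⟩ := Submodule.mem_span_singleton.mp hx
  show (Algebra.linearMap K H ∘ₗ Coalgebra.counit) (c • (1:H)) = c • (1:H)
  rw [map_smul]
  simp [Bialgebra.counit_one]

lemma convT_of_mem_G0 (hone : (1 : H) ∈ G 0) (hconn : Module.finrank K (G 0) = 1) :
    ∀ x ∈ G 0, (LinearMap.id - convOne : H →ₗ[K] H) x = 0 := by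
  intro x hx
  rw [LinearMap.sub_apply, LinearMap.id_apply, convOne_of_mem_G0 G hone hconn x hx, sub_self]

lemma convPow_T_vanish (hone : (1 : H) ∈ G 0) (hconn : Module.finrank K (G 0) = 1)
    (hcomul : ∀ n : ℕ, ∀ a ∈ G n,
      Coalgebra.comul (R := K) a ∈
        ∑ p ∈ Finset.HasAntidiagonal.antidiagonal n,
          LinearMap.range (TensorProduct.map (G p.1).subtype (G p.2).subtype)) :
    ∀ n m : ℕ, n < m → ∀ x ∈ G n,
      convPow (LinearMap.id - convOne (K := K) (H := H)) m x = 0 := by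
  set T : H →ₗ[K] H := LinearMap.id - convOne with hT
  intro n
  induction n using Nat.strong_induction_on with
  | _ n IH =>
    intro m hm x hx
    obtain ⟨m, rfl⟩ : ∃ m', m = m' + 1 := ⟨m - 1, by omega⟩
    show (LinearMap.mul' K H ∘ₗ TensorProduct.map (convPow T m) T) (Coalgebra.comul (R := K) x) = 0
    rw [← LinearMap.mem_ker]
    refine Finset.sum_induction _ (· ≤ LinearMap.ker (LinearMap.mul' K H ∘ₗ TensorProduct.map (convPow T m) T))
      (fun a b ha hb => sup_le ha hb) bot_le ?_ (hcomul n x hx)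
    rintro ⟨p, q⟩ hpq
    rw [Finset.HasAntidiagonal.mem_antidiagonal] at hpq
    rintro _ ⟨t, rfl⟩
    rw [LinearMap.mem_ker, LinearMap.comp_apply, ← LinearMap.comp_apply (TensorProduct.map _ _),
      ← TensorProduct.map_comp]
    rcases Nat.eq_zero_or_pos q with hq | hq
    · have hT0 : T ∘ₗ (G q).subtype = 0 := by
        ext b
        exact convT_of_mem_G0 G hone hconn b (hq ▸ b.2)
      rw [hT0, TensorProduct.map_zero_right]
      simp
    · have hp : p < n := by omega
      have h0 : convPow T m ∘ₗ (G p).subtype = 0 := by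
        ext a
        exact IH p hp m (by omega) a a.2
      rw [h0, TensorProduct.map_zero_left]
      simp

end Graded

lemma convPow_zero (f : H →ₗ[K] H) : convPow f 0 = convOne := rfl

lemma geom_succ (f : H →ₗ[K] H) (N : ℕ) :
    geom f (N + 1) = geom f N + ((-1 : K) ^ (N + 1)) • convPow f (N + 1) :=
  Finset.sum_range_succ _ _

lemma conv_geom_right (f : H →ₗ[K] H) (N : ℕ) :
    conv f (geom f N) = convOne - geom f (N + 1) := by
  unfold geom
  rw [conv_sum_right]
  simp_rw [conv_smul_right, conv_convPow]
  rw [Finset.sum_range_succ' (fun m => ((-1 : K) ^ m) • convPow f m) (N + 1)]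
  simp only [pow_succ, mul_neg_one, neg_smul, Finset.sum_neg_distrib, pow_zero, one_smul,
    convPow_zero]
  simp only [Finset.sum_neg_distrib, neg_smul (M := H →ₗ[K] H) (R := K)]
  abel

lemma conv_geom_left (f : H →ₗ[K] H) (N : ℕ) :
    conv (geom f N) f = convOne - geom f (N + 1) := by
  unfold geom
  rw [conv_sum_left]
  have : ∀ m : ℕ, conv (convPow f m) f = convPow f (m + 1) := fun _ => rfl
  simp_rw [conv_smul_left, this]
  rw [Finset.sum_range_succ' (fun m => ((-1 : K) ^ m) • convPow f m) (N + 1)]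
  simp only [pow_succ, mul_neg_one, neg_smul, Finset.sum_neg_distrib, pow_zero, one_smul,
    convPow_zero]
  simp only [Finset.sum_neg_distrib, neg_smul (M := H →ₗ[K] H) (R := K)]
  abel

end GradedAntipode

open GradedAntipode

theorem graded_connected_bialgebra_has_unique_antipode
    (K : Type) [Field K] [CharZero K]
    (H : Type) [Ring H] [Bialgebra K H]
    (G : ℕ → Submodule K H)
    (hdirect : DirectSum.IsInternal G)
    (hone : (1 : H) ∈ G 0)
    (hmul : ∀ i j : ℕ, ∀ a ∈ G i, ∀ b ∈ G j, a * b ∈ G (i + j))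
    (hcomul : ∀ n : ℕ, ∀ a ∈ G n,
      Coalgebra.comul (R := K) a ∈
        ∑ p ∈ Finset.HasAntidiagonal.antidiagonal n,
          LinearMap.range (TensorProduct.map (G p.1).subtype (G p.2).subtype))
    (hconn : Module.finrank K (G 0) = 1) :
    ∃! S : H →ₗ[K] H,
      (LinearMap.mul' K H ∘ₗ TensorProduct.map S LinearMap.id ∘ₗ
          Coalgebra.comul (R := K) = Algebra.linearMap K H ∘ₗ Coalgebra.counit (R := K)) ∧
      (LinearMap.mul' K H ∘ₗ TensorProduct.map LinearMap.id S ∘ₗ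
          Coalgebra.comul (R := K) = Algebra.linearMap K H ∘ₗ Coalgebra.counit (R := K)) := by
  classical
  set T : H →ₗ[K] H := LinearMap.id - convOne with hT
  have vanish := convPow_T_vanish G hone hconn hcomul
  -- the antipode, assembled degreewise from truncated geometric series
  set equiv : (DirectSum ℕ fun n => G n) ≃ₗ[K] H := LinearEquiv.ofBijective (DirectSum.coeLinearMap G) hdirect
    with hequiv
  set S : H →ₗ[K] H :=
    (DirectSum.toModule K ℕ H (fun n => geom T n ∘ₗ (G n).subtype)) ∘ₗ equiv.symm.toLinearMap
    with hS
  -- value of S on a homogeneous element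
  have S_on : ∀ n : ℕ, ∀ x ∈ G n, S x = geom T n x := by
    intro n x hx
    have h1 : equiv.symm x = DirectSum.of (fun n => (G n : Type)) n ⟨x, hx⟩ := by
      rw [LinearEquiv.symm_apply_eq, hequiv]
      exact (DirectSum.coeLinearMap_of (i := n) (x := ⟨x, hx⟩)).symm
    show (DirectSum.toModule K ℕ H (fun n => geom T n ∘ₗ (G n).subtype)) (equiv.symm x)
      = geom T n x
    rw [h1, ← DirectSum.lof_eq_of K, DirectSum.toModule_lof]
    rfl
  -- S agrees with any sufficiently long truncation
  have S_eq_geom : ∀ N n : ℕ, n ≤ N → ∀ x ∈ G n, S x = geom T N x := by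
    intro N n hnN x hx
    have expand : ∀ M : ℕ, geom T M x
        = ∑ m ∈ Finset.range (M + 1), ((-1 : K) ^ m) • convPow T m x := by
      intro M
      rw [geom, LinearMap.sum_apply]
      simp_rw [LinearMap.smul_apply]
    rw [S_on n x hx, expand, expand]
    refine Finset.sum_subset (Finset.range_subset_range.mpr (by omega)) ?_
    intro m hm hnm
    rw [Finset.mem_range, not_lt] at hnm
    rw [vanish n m (by omega) x hx, smul_zero]
  -- identity map as convolution unit plus T
  have hid : (LinearMap.id : H →ₗ[K] H) = convOne + T := by rw [hT]; abel
  -- main identity, right version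
  have main_right : ∀ n : ℕ, ∀ x ∈ G n, conv LinearMap.id S x = convOne (K := K) x := by
    intro n x hx
    have e1 : conv LinearMap.id S x = conv LinearMap.id (geom T n) x := by
      set L : H ⊗[K] H →ₗ[K] H :=
        LinearMap.mul' K H ∘ₗ TensorProduct.map LinearMap.id S
          - LinearMap.mul' K H ∘ₗ TensorProduct.map LinearMap.id (geom T n) with hL
      have hle : (∑ p ∈ Finset.HasAntidiagonal.antidiagonal n,
          LinearMap.range (TensorProduct.map (G p.1).subtype (G p.2).subtype))
          ≤ LinearMap.ker L := by
        refine Finset.sum_induction _ (· ≤ LinearMap.ker L)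
          (fun a b ha hb => sup_le ha hb) bot_le ?_
        rintro ⟨p, q⟩ hpq
        rw [Finset.HasAntidiagonal.mem_antidiagonal] at hpq
        rintro _ ⟨t, rfl⟩
        rw [LinearMap.mem_ker, hL, LinearMap.sub_apply, LinearMap.comp_apply,
          LinearMap.comp_apply,
          ← LinearMap.comp_apply (TensorProduct.map LinearMap.id S),
          ← TensorProduct.map_comp,
          ← LinearMap.comp_apply (TensorProduct.map LinearMap.id (geom T n)),
          ← TensorProduct.map_comp]
        have hq : S ∘ₗ (G q).subtype = geom T n ∘ₗ (G q).subtype := by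
          ext b
          exact S_eq_geom n q (by omega) b b.2
        rw [hq, sub_self]
      have h0 := hle (hcomul n x hx)
      rw [LinearMap.mem_ker, LinearMap.sub_apply, LinearMap.comp_apply, LinearMap.comp_apply] at h0
      exact sub_eq_zero.mp h0
    rw [e1]
    have e2 : conv LinearMap.id (geom T n) = geom T n + (convOne - geom T (n + 1)) := by
      nth_rewrite 1 [hid]
      rw [conv_add_left, conv_one_left, conv_geom_right]
    rw [e2, LinearMap.add_apply, LinearMap.sub_apply, geom_succ, LinearMap.add_apply,
      LinearMap.smul_apply, vanish n (n + 1) (by omega) x hx, smul_zero, add_zero]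
    abel
  -- main identity, left version
  have main_left : ∀ n : ℕ, ∀ x ∈ G n, conv S LinearMap.id x = convOne (K := K) x := by
    intro n x hx
    have e1 : conv S LinearMap.id x = conv (geom T n) LinearMap.id x := by
      set L : H ⊗[K] H →ₗ[K] H :=
        LinearMap.mul' K H ∘ₗ TensorProduct.map S LinearMap.id
          - LinearMap.mul' K H ∘ₗ TensorProduct.map (geom T n) LinearMap.id with hL
      have hle : (∑ p ∈ Finset.HasAntidiagonal.antidiagonal n,
          LinearMap.range (TensorProduct.map (G p.1).subtype (G p.2).subtype))
          ≤ LinearMap.ker L := by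
        refine Finset.sum_induction _ (· ≤ LinearMap.ker L)
          (fun a b ha hb => sup_le ha hb) bot_le ?_
        rintro ⟨p, q⟩ hpq
        rw [Finset.HasAntidiagonal.mem_antidiagonal] at hpq
        rintro _ ⟨t, rfl⟩
        rw [LinearMap.mem_ker, hL, LinearMap.sub_apply, LinearMap.comp_apply,
          LinearMap.comp_apply,
          ← LinearMap.comp_apply (TensorProduct.map S LinearMap.id),
          ← TensorProduct.map_comp,
          ← LinearMap.comp_apply (TensorProduct.map (geom T n) LinearMap.id),
          ← TensorProduct.map_comp]
        have hp : S ∘ₗ (G p).subtype = geom T n ∘ₗ (G p).subtype := by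
          ext a
          exact S_eq_geom n p (by omega) a a.2
        rw [hp, sub_self]
      have h0 := hle (hcomul n x hx)
      rw [LinearMap.mem_ker, LinearMap.sub_apply, LinearMap.comp_apply, LinearMap.comp_apply] at h0
      exact sub_eq_zero.mp h0
    rw [e1]
    have e2 : conv (geom T n) LinearMap.id = geom T n + (convOne - geom T (n + 1)) := by
      nth_rewrite 1 [hid]
      rw [conv_add_right, conv_one_right, conv_geom_left]
    rw [e2, LinearMap.add_apply, LinearMap.sub_apply, geom_succ, LinearMap.add_apply,
      LinearMap.smul_apply, vanish n (n + 1) (by omega) x hx, smul_zero, add_zero]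
    abel
  -- extensionality via the grading
  have hext : ∀ F₁ F₂ : H →ₗ[K] H, (∀ n : ℕ, ∀ x ∈ G n, F₁ x = F₂ x) → F₁ = F₂ := by
    intro F₁ F₂ h
    ext x
    have hx : x ∈ (⊤ : Submodule K H) := trivial
    rw [← hdirect.submodule_iSup_eq_top] at hx
    refine Submodule.iSup_induction (motive := fun y => F₁ y = F₂ y) G hx
      (fun n y hy => h n y hy) (by simp) ?_
    intro y z hy hz
    rw [map_add, map_add, hy, hz]
  have hSid : conv S LinearMap.id = convOne (K := K) (H := H) :=
    hext _ _ (fun n x hx => main_left n x hx)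
  have hidS : conv LinearMap.id S = convOne (K := K) (H := H) :=
    hext _ _ (fun n x hx => main_right n x hx)
  refine ⟨S, ⟨hSid, hidS⟩, ?_⟩
  rintro S' ⟨h1', h2'⟩
  have c1 : conv S' LinearMap.id = convOne (K := K) (H := H) := h1'
  calc S' = conv S' convOne := (conv_one_right S').symm
    _ = conv S' (conv LinearMap.id S) := by rw [hidS]
    _ = conv (conv S' LinearMap.id) S := (conv_assoc _ _ _).symm
    _ = conv convOne S := by rw [c1]
    _ = S := conv_one_left S
end

section
/- For all natural numbers M, N and all i ≥ 0, the following identities hold in A_{M+N}: e_i(B₁ ∪ B₂) = Σ_{k+ℓ=i} e_k(B₁)·e_ℓ(B₂), and ẽ_i(B₁ ∪ B₂) = Σ_{k+ℓ=i} ( ẽ_k(B₁)·e_ℓ(B₂) + e_ℓ(B₁)·ẽ_k(B₂) ). (This is the two-alphabet form of the coproduct formulas Δe_i = Σ_{k+ℓ=i} e_k ⊗ e_ℓ and Δẽ_i = Σ_{k+ℓ=i} (ẽ_k ⊗ e_ℓ + e_ℓ ⊗ ẽ_k) for the elementary symmetric functions in superspace.) -/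
/-!
**Statement 2.** Two-alphabet form of the coproduct formulas for the elementary
symmetric functions in superspace:
`e_i(B₁ ∪ B₂) = Σ_{k+ℓ=i} e_k(B₁) e_ℓ(B₂)` and
`ẽ_i(B₁ ∪ B₂) = Σ_{k+ℓ=i} (ẽ_k(B₁) e_ℓ(B₂) + e_ℓ(B₁) ẽ_k(B₂))`.
-/

open TensorProduct

set_option synthInstance.maxHeartbeats 1000000
set_option maxHeartbeats 1000000

noncomputable section

/-- The ring of polynomials in superspace in `N` variables. -/
abbrev SuperAlg (N : ℕ) : Type :=
  MvPolynomial (Fin N) ℚ ⊗[ℚ] ExteriorAlgebra ℚ (Fin N → ℚ)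

/-- The (bosonic) variable `x_i`. -/
def sx {N : ℕ} (i : Fin N) : SuperAlg N := MvPolynomial.X i ⊗ₜ[ℚ] 1

/-- The (fermionic) variable `θ_i`. -/
def sθ {N : ℕ} (i : Fin N) : SuperAlg N :=
  1 ⊗ₜ[ℚ] ExteriorAlgebra.ι ℚ (Pi.single i 1)

/-- The elementary symmetric function in superspace `e_r(B)` on the alphabet `B`. -/
def esym {N : ℕ} (B : Finset (Fin N)) (r : ℕ) : SuperAlg N :=
  (∑ S ∈ B.powersetCard r, ∏ i ∈ S, MvPolynomial.X i) ⊗ₜ[ℚ] 1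

/-- The fermionic elementary symmetric function in superspace `ẽ_k(B)` on the alphabet `B`. -/
def esymTilde {N : ℕ} (B : Finset (Fin N)) (k : ℕ) : SuperAlg N :=
  ∑ i ∈ B, sθ i *
    ((∑ S ∈ (B.erase i).powersetCard k, ∏ j ∈ S, MvPolynomial.X j) ⊗ₜ[ℚ] 1)

/-- polynomial-level elementary symmetric function on an alphabet -/
def pe {N : ℕ} (B : Finset (Fin N)) (r : ℕ) : MvPolynomial (Fin N) ℚ :=
  ∑ S ∈ B.powersetCard r, ∏ i ∈ S, MvPolynomial.X i

lemma pe_union {N : ℕ} {B₁ B₂ : Finset (Fin N)} (h : Disjoint B₁ B₂) (i : ℕ) :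
    pe (B₁ ∪ B₂) i = ∑ p ∈ Finset.HasAntidiagonal.antidiagonal i, pe B₁ p.1 * pe B₂ p.2 := by
  classical
  have hrhs : ∀ p : ℕ × ℕ, pe B₁ p.1 * pe B₂ p.2 =
      ∑ q ∈ B₁.powersetCard p.1 ×ˢ B₂.powersetCard p.2,
        ∏ j ∈ q.1 ∪ q.2, MvPolynomial.X (R := ℚ) j := by
    intro p
    rw [pe, pe, Finset.sum_mul_sum, Finset.sum_product]
    refine Finset.sum_congr rfl fun S₁ hS₁ => Finset.sum_congr rfl fun S₂ hS₂ => ?_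
    rw [Finset.prod_union
      (h.mono (Finset.mem_powersetCard.1 hS₁).1 (Finset.mem_powersetCard.1 hS₂).1)]
  simp_rw [hrhs]
  rw [Finset.sum_sigma']
  unfold pe
  refine Finset.sum_nbij' (i := fun S => ⟨((S ∩ B₁).card, (S ∩ B₂).card), (S ∩ B₁, S ∩ B₂)⟩)
    (j := fun q => q.2.1 ∪ q.2.2) ?_ ?_ ?_ ?_ ?_
  · intro S hS
    obtain ⟨hsub, hcard⟩ := Finset.mem_powersetCard.1 hS
    refine Finset.mem_sigma.2 ⟨?_, ?_⟩
    · rw [Finset.HasAntidiagonal.mem_antidiagonal, ← hcard, ← Finset.card_union_of_disjoint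
        (h.mono Finset.inter_subset_right Finset.inter_subset_right),
        ← Finset.inter_union_distrib_left, Finset.inter_eq_left.2 hsub]
    · exact Finset.mem_product.2 ⟨Finset.mem_powersetCard.2 ⟨Finset.inter_subset_right, rfl⟩,
        Finset.mem_powersetCard.2 ⟨Finset.inter_subset_right, rfl⟩⟩
  · intro q hq
    obtain ⟨hp, hq2⟩ := Finset.mem_sigma.1 hq
    obtain ⟨h1, h2⟩ := Finset.mem_product.1 hq2
    obtain ⟨h1s, h1c⟩ := Finset.mem_powersetCard.1 h1
    obtain ⟨h2s, h2c⟩ := Finset.mem_powersetCard.1 h2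
    refine Finset.mem_powersetCard.2 ⟨Finset.union_subset_union h1s h2s, ?_⟩
    rw [Finset.card_union_of_disjoint (h.mono h1s h2s), h1c, h2c]
    exact Finset.HasAntidiagonal.mem_antidiagonal.1 hp
  · intro S hS
    obtain ⟨hsub, _⟩ := Finset.mem_powersetCard.1 hS
    simp only
    rw [← Finset.inter_union_distrib_left, Finset.inter_eq_left.2 hsub]
  · intro q hq
    obtain ⟨hp, hq2⟩ := Finset.mem_sigma.1 hq
    obtain ⟨h1, h2⟩ := Finset.mem_product.1 hq2
    obtain ⟨h1s, h1c⟩ := Finset.mem_powersetCard.1 h1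
    obtain ⟨h2s, h2c⟩ := Finset.mem_powersetCard.1 h2
    have e1 : (q.2.1 ∪ q.2.2) ∩ B₁ = q.2.1 := by
      ext x
      simp only [Finset.mem_inter, Finset.mem_union]
      constructor
      · rintro ⟨hx | hx, hxB⟩
        · exact hx
        · exact absurd hxB (Finset.disjoint_right.1 h (h2s hx))
      · exact fun hx => ⟨Or.inl hx, h1s hx⟩
    have e2 : (q.2.1 ∪ q.2.2) ∩ B₂ = q.2.2 := by
      ext x
      simp only [Finset.mem_inter, Finset.mem_union]
      constructor
      · rintro ⟨hx | hx, hxB⟩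
        · exact absurd hxB (Finset.disjoint_left.1 h (h1s hx))
        · exact hx
      · exact fun hx => ⟨Or.inr hx, h2s hx⟩
    obtain ⟨⟨k, l⟩, S₁, S₂⟩ := q
    simp only at e1 e2 h1c h2c ⊢
    subst h1c h2c
    simp [e1, e2]
  · intro S hS
    obtain ⟨hsub, _⟩ := Finset.mem_powersetCard.1 hS
    rw [show S ∩ B₁ ∪ S ∩ B₂ = S by
      rw [← Finset.inter_union_distrib_left, Finset.inter_eq_left.2 hsub]]

lemma sum_antidiagonal_swap {β : Type*} [AddCommMonoid β] (n : ℕ) (f : ℕ → ℕ → β) :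
    ∑ p ∈ Finset.HasAntidiagonal.antidiagonal n, f p.1 p.2 = ∑ p ∈ Finset.HasAntidiagonal.antidiagonal n, f p.2 p.1 := by
  conv_lhs => rw [← Finset.HasAntidiagonal.map_swap_antidiagonal]
  rw [Finset.sum_map]
  simp

lemma esym_eq {N : ℕ} (B : Finset (Fin N)) (r : ℕ) : esym B r = pe B r ⊗ₜ[ℚ] 1 := rfl

lemma esym_mul {N : ℕ} (B B' : Finset (Fin N)) (r s : ℕ) :
    esym B r * esym B' s = (pe B r * pe B' s) ⊗ₜ[ℚ] 1 := by
  rw [esym_eq, esym_eq, Algebra.TensorProduct.tmul_mul_tmul, one_mul]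

lemma tmul_one_comm {N : ℕ} (q : MvPolynomial (Fin N) ℚ) (z : SuperAlg N) :
    (q ⊗ₜ[ℚ] 1) * z = z * (q ⊗ₜ[ℚ] 1) := by
  induction z using TensorProduct.induction_on with
  | zero => simp
  | tmul a b => simp [Algebra.TensorProduct.tmul_mul_tmul, mul_comm]
  | add a b ha hb => rw [mul_add, add_mul, ha, hb]

theorem esym_superspace_coproduct (M N : ℕ) (i : ℕ) :
    (esym ((Finset.univ.image (Fin.castAdd N)) ∪ (Finset.univ.image (Fin.natAdd M))) i
        = ∑ p ∈ Finset.HasAntidiagonal.antidiagonal i,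
            esym (Finset.univ.image (Fin.castAdd N)) p.1 *
              esym (Finset.univ.image (Fin.natAdd M)) p.2) ∧
    (esymTilde ((Finset.univ.image (Fin.castAdd N)) ∪ (Finset.univ.image (Fin.natAdd M))) i
        = ∑ p ∈ Finset.HasAntidiagonal.antidiagonal i,
            (esymTilde (Finset.univ.image (Fin.castAdd N)) p.1 *
                esym (Finset.univ.image (Fin.natAdd M)) p.2
              + esym (Finset.univ.image (Fin.castAdd N)) p.2 *
                  esymTilde (Finset.univ.image (Fin.natAdd M)) p.1)) := by
  classical
  set B₁ : Finset (Fin (M + N)) := Finset.univ.image (Fin.castAdd N) with hB₁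
  set B₂ : Finset (Fin (M + N)) := Finset.univ.image (Fin.natAdd M) with hB₂
  have hdisj : Disjoint B₁ B₂ := by
    rw [Finset.disjoint_left]
    rintro a ha hb
    simp only [hB₁, hB₂, Finset.mem_image, Finset.mem_univ, true_and] at ha hb
    obtain ⟨b, rfl⟩ := ha
    obtain ⟨c, hc⟩ := hb
    have := congrArg Fin.val hc
    simp [Fin.natAdd, Fin.castAdd, Fin.castLE] at this
    omega
  constructor
  · rw [esym_eq, show (∑ p ∈ Finset.HasAntidiagonal.antidiagonal i, esym B₁ p.1 * esym B₂ p.2)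
        = (∑ p ∈ Finset.HasAntidiagonal.antidiagonal i, pe B₁ p.1 * pe B₂ p.2) ⊗ₜ[ℚ] 1 by
      rw [TensorProduct.sum_tmul]; exact Finset.sum_congr rfl fun p _ => esym_mul ..]
    rw [pe_union hdisj]
  · rw [esymTilde, Finset.sum_union hdisj]
    have h1 : ∀ a ∈ B₁, sθ a *
        ((∑ S ∈ ((B₁ ∪ B₂).erase a).powersetCard i, ∏ j ∈ S, MvPolynomial.X j) ⊗ₜ[ℚ] 1)
        = ∑ p ∈ Finset.HasAntidiagonal.antidiagonal i,
            (sθ a * (pe (B₁.erase a) p.1 ⊗ₜ[ℚ] 1)) * esym B₂ p.2 := by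
      intro a ha
      have hane : a ∉ B₂ := fun hb => (Finset.disjoint_left.1 hdisj ha) hb
      have herase : (B₁ ∪ B₂).erase a = B₁.erase a ∪ B₂ := by
        rw [Finset.erase_union_distrib, Finset.erase_eq_of_notMem hane]
      have hpe : (∑ S ∈ ((B₁ ∪ B₂).erase a).powersetCard i,
          ∏ j ∈ S, MvPolynomial.X (R := ℚ) j) = pe ((B₁ ∪ B₂).erase a) i := rfl
      rw [hpe, herase, pe_union (hdisj.mono (Finset.erase_subset a B₁) le_rfl)]
      rw [TensorProduct.sum_tmul, Finset.mul_sum]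
      refine Finset.sum_congr rfl fun p _ => ?_
      rw [esym_eq]
      simp only [sθ, Algebra.TensorProduct.tmul_mul_tmul, one_mul, mul_one]
    have h2 : ∀ a ∈ B₂, sθ a *
        ((∑ S ∈ ((B₁ ∪ B₂).erase a).powersetCard i, ∏ j ∈ S, MvPolynomial.X j) ⊗ₜ[ℚ] 1)
        = ∑ p ∈ Finset.HasAntidiagonal.antidiagonal i,
            esym B₁ p.2 * (sθ a * (pe (B₂.erase a) p.1 ⊗ₜ[ℚ] 1)) := by
      intro a ha
      have hane : a ∉ B₁ := fun hb => (Finset.disjoint_left.1 hdisj hb) ha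
      have herase : (B₁ ∪ B₂).erase a = B₁ ∪ B₂.erase a := by
        rw [Finset.erase_union_distrib, Finset.erase_eq_of_notMem hane]
      have hpe : (∑ S ∈ ((B₁ ∪ B₂).erase a).powersetCard i,
          ∏ j ∈ S, MvPolynomial.X (R := ℚ) j) = pe ((B₁ ∪ B₂).erase a) i := rfl
      rw [hpe, herase, pe_union (hdisj.mono le_rfl (Finset.erase_subset a B₂))]
      rw [sum_antidiagonal_swap i (fun k l => pe B₁ k * pe (B₂.erase a) l)]
      rw [TensorProduct.sum_tmul, Finset.mul_sum]
      refine Finset.sum_congr rfl fun p _ => ?_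
      rw [esym_eq]
      simp only [sθ, Algebra.TensorProduct.tmul_mul_tmul, one_mul, mul_one]
    rw [Finset.sum_congr rfl h1, Finset.sum_congr rfl h2, Finset.sum_comm,
      Finset.sum_comm (s := B₂)]
    rw [← Finset.sum_add_distrib]
    refine Finset.sum_congr rfl fun p _ => ?_
    rw [← Finset.sum_mul, ← Finset.mul_sum, esymTilde, esymTilde]
    rfl

end
end
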